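/- arXiv:2201.10172 — 2 statements merged into one kernel-verified Lean document; each statement's English description precedes it below -/
import Mathlib

section
/- Let G = BS(m,n) be the Baumslag–Solitar group with 0 < m ≤ |n| and d = gcd(m,n). Then for all integers k, x, y, the elements [(t^{-k} a^d t^k)^x, a^y] and [(t^{-k} a t^k)^y, (a^d)^x] belong to γ_ω(G). -/
def BSRels (m n : ℤ) : Set (FreeGroup (Fin 2)) :=
  {(FreeGroup.of 0)⁻¹ * (FreeGroup.of 1) ^ m * FreeGroup.of 0 * ((FreeGroup.of 1) ^ n)⁻¹}

/-- The Baumslag–Solitar group `BS(m,n) = ⟨t, a ∣ t⁻¹ aᵐ t = aⁿ⟩`. -/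
abbrev BS (m n : ℤ) : Type := PresentedGroup (BSRels m n)

/-- The generator `t` of `BS(m,n)`. -/
def BS.t (m n : ℤ) : BS m n := PresentedGroup.of 0

/-- The generator `a` of `BS(m,n)`. -/
def BS.a (m n : ℤ) : BS m n := PresentedGroup.of 1

/-- `γ_ω(G)`: the intersection of all terms of the lower central series
(`lowerCentralSeries G c` is `γ_{c+1}(G)`). -/
def lcsOmega (G : Type*) [Group G] : Subgroup G := ⨅ c : ℕ, (⊤ : Subgroup G).lowerCentralSeries c

/-- The commutator `[x,y] = x⁻¹y⁻¹xy`. -/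
def commElt {G : Type*} [Group G] (x y : G) : G := x⁻¹ * y⁻¹ * x * y

/-!
Write `b k = conjZPow t a k = t^{-k} a t^k`, so that `b (k+1) ^ m = b k ^ n`, and `m = m' d`,
`n = n' d` with `m'`, `n'` coprime. From `⁅a^{mj}, t⁻¹⁆ = a^{(m-n)j}` one gets
`a^{d (m'-n')^c} ∈ γ_{c+1}`. Then `⁅b_i^d, b_j⁆ ∈ γ_{c+1}` by induction on `c`: modulo `γ_{c+2}`
these commutators are central, hence invariant under conjugation by `t`, so that
`⁅b_i^d, b_j⁆ = v (i - j)` with `v k = ⁅b_k^d, a⁆`. The defining relation gives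
`v (k+1) ^ m' = v k ^ n'`, the first step gives `v k ^ (m'-n')^c = 1`, and as both `m'` and `n'`
are coprime to `m' - n'`, the triviality of `v 0` propagates to every `v k`.
-/

open scoped commutatorElement

section Commutators

variable {G : Type*} [Group G]

theorem commutatorElement_zpow_left_of_forall_commute {x y : G}
    (hxy : ∀ g : G, Commute ⁅x, y⁆ g) (r : ℤ) : ⁅x ^ r, y⁆ = ⁅x, y⁆ ^ r := by
  have hconj : y * x⁻¹ * y⁻¹ = x⁻¹ * ⁅x, y⁆ := by rw [commutatorElement_def]; group
  calc ⁅x ^ r, y⁆ = x ^ r * (y * x⁻¹ * y⁻¹) ^ r := by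
        rw [conj_zpow, commutatorElement_def, inv_zpow']
        group
    _ = ⁅x, y⁆ ^ r := by
        rw [hconj, ((hxy x⁻¹).symm).mul_zpow, inv_zpow']
        group

theorem eq_one_of_zpow_eq_one_of_isCoprime {v : G} {a b : ℤ} (hab : IsCoprime a b)
    (ha : v ^ a = 1) (hb : v ^ b = 1) : v = 1 := by
  obtain ⟨u, w, huw⟩ := hab
  calc v = v ^ (u * a + w * b) := by rw [huw, zpow_one]
    _ = 1 := by rw [zpow_add, zpow_mul', zpow_mul', ha, hb, one_zpow, one_zpow, one_mul]

theorem eq_one_of_zpow_succ_eq_zpow {v : ℤ → G} {a b e : ℤ} (ha : IsCoprime a e)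
    (hb : IsCoprime b e) (h₀ : v 0 = 1) (hrec : ∀ k, v (k + 1) ^ a = v k ^ b)
    (he : ∀ k, v k ^ e = 1) (k : ℤ) : v k = 1 := by
  induction k using Int.induction_on with
  | zero => exact h₀
  | succ k ih =>
    exact eq_one_of_zpow_eq_one_of_isCoprime ha (by rw [hrec, ih, one_zpow]) (he _)
  | pred k ih =>
    exact eq_one_of_zpow_eq_one_of_isCoprime hb
      (by rw [← hrec, sub_add_cancel, ih, one_zpow]) (he _)

end Commutators

section ConjZPow

variable {G H : Type*} [Group G] [Group H]

def conjZPow (t a : G) (k : ℤ) : G := t ^ (-k) * a * t ^ k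

theorem conjZPow_eq_conj (t a : G) (k : ℤ) : conjZPow t a k = MulAut.conj (t ^ (-k)) a := by
  rw [conjZPow, MulAut.conj_apply, zpow_neg, inv_inv]

@[simp]
theorem conjZPow_zero (t a : G) : conjZPow t a 0 = a := by simp [conjZPow]

theorem conjZPow_one (t a : G) : conjZPow t a 1 = t⁻¹ * a * t := by simp [conjZPow]

theorem conjZPow_add (t a : G) (k s : ℤ) :
    conjZPow t a (k + s) = conjZPow t (conjZPow t a k) s := by
  simp only [conjZPow, neg_add, zpow_add]
  group

theorem conjZPow_zpow (t a : G) (k r : ℤ) : conjZPow t a k ^ r = conjZPow t (a ^ r) k := by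
  simp only [conjZPow_eq_conj, map_zpow]

theorem conjZPow_commutatorElement (t a b : G) (k : ℤ) :
    conjZPow t ⁅a, b⁆ k = ⁅conjZPow t a k, conjZPow t b k⁆ := by
  simp only [conjZPow_eq_conj, map_commutatorElement]

theorem conjZPow_of_commute {t a : G} (h : Commute a t) (k : ℤ) : conjZPow t a k = a := by
  rw [conjZPow, mul_assoc, (h.zpow_right k).eq, ← mul_assoc, ← zpow_add, neg_add_cancel,
    zpow_zero, one_mul]

theorem map_conjZPow (φ : G →* H) (t a : G) (k : ℤ) :
    φ (conjZPow t a k) = conjZPow (φ t) (φ a) k := by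
  simp only [conjZPow, map_mul, map_zpow]

theorem conjZPow_mem {N : Subgroup G} [N.Normal] {a : G} (ha : a ∈ N) (t : G) (k : ℤ) :
    conjZPow t a k ∈ N := by
  rw [conjZPow_eq_conj, MulAut.conj_apply]
  exact Subgroup.Normal.conj_mem inferInstance a ha _

end ConjZPow

section CentralCommutators

variable {G : Type*} [Group G]

theorem commutatorElement_conjZPow_eq_one {τ α : G} {d m' n' e : ℤ}
    (hrel : τ⁻¹ * α ^ (m' * d) * τ = α ^ (n' * d))
    (hcent : ∀ i j : ℤ, ∀ g : G, Commute ⁅conjZPow τ α i ^ d, conjZPow τ α j⁆ g)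
    (he : ∀ k : ℤ, ⁅conjZPow τ α k ^ (e * d), α⁆ = 1)
    (hm' : IsCoprime m' e) (hn' : IsCoprime n' e) (i j : ℤ) :
    ⁅conjZPow τ α i ^ d, conjZPow τ α j⁆ = 1 := by
  set β := conjZPow τ α
  set v : ℤ → G := fun k ↦ ⁅β k ^ d, α⁆ with hv
  have hv_central (k : ℤ) (g : G) : Commute (v k) g := by
    simpa [β] using hcent k 0 g
  have hshift : ⁅β i ^ d, β j⁆ = v (i - j) := by
    calc ⁅β i ^ d, β j⁆ = conjZPow τ (v (i - j)) j := by
          rw [hv, conjZPow_commutatorElement, ← conjZPow_zpow, ← conjZPow_add, sub_add_cancel]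
      _ = v (i - j) := conjZPow_of_commute (hv_central _ τ) j
  have hpow (k : ℤ) : β (k + 1) ^ (m' * d) = β k ^ (n' * d) := by
    simp only [β, conjZPow_zpow]
    rw [add_comm, conjZPow_add, conjZPow_one, hrel]
  have hrec (k : ℤ) : v (k + 1) ^ m' = v k ^ n' := by
    simp only [hv, ← commutatorElement_zpow_left_of_forall_commute (hv_central _), ← zpow_mul',
      hpow]
  have hv_e (k : ℤ) : v k ^ e = 1 := by
    rw [hv, ← commutatorElement_zpow_left_of_forall_commute (hv_central k), ← zpow_mul', he]
  have hv_zero : v 0 = 1 := by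
    simp [hv, β, commutatorElement_eq_one_iff_commute, Commute.zpow_left]
  rw [hshift]
  exact eq_one_of_zpow_succ_eq_zpow hm' hn' hv_zero hrec hv_e _

end CentralCommutators

section LowerCentralSeries

variable {G : Type*} [Group G]

theorem QuotientGroup.commute_mk_iff {N : Subgroup G} [N.Normal] {x y : G} :
    Commute (x : G ⧸ N) y ↔ ⁅x, y⁆ ∈ N := by
  rw [← commutatorElement_eq_one_iff_commute, ← QuotientGroup.eq_one_iff]
  exact Iff.of_eq (congrArg (· = 1) (map_commutatorElement (QuotientGroup.mk' N) x y).symm)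

theorem commutatorElement_mem_lowerCentralSeries_succ {c : ℕ} {x : G}
    (hx : x ∈ (⊤ : Subgroup G).lowerCentralSeries c) (g : G) :
    ⁅x, g⁆ ∈ (⊤ : Subgroup G).lowerCentralSeries (c + 1) :=
  Subgroup.commutator_mem_commutator hx (Subgroup.mem_top g)

theorem commute_mk_of_mem_lowerCentralSeries {c : ℕ} {x : G}
    (hx : x ∈ (⊤ : Subgroup G).lowerCentralSeries c)
    (q : G ⧸ (⊤ : Subgroup G).lowerCentralSeries (c + 1)) : Commute (x : G ⧸ _) q := by
  induction q using QuotientGroup.induction_on with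
  | H g =>
    exact QuotientGroup.commute_mk_iff.mpr (commutatorElement_mem_lowerCentralSeries_succ hx g)

instance lcsOmega_normal : (lcsOmega G).Normal :=
  Subgroup.normal_iInf_normal fun _ ↦ inferInstance

theorem commElt_zpow_zpow_mem {N : Subgroup G} [N.Normal] {u w : G} (h : ⁅u, w⁆ ∈ N)
    (x y : ℤ) : commElt (u ^ x) (w ^ y) ∈ N := by
  have hc : Commute (u : G ⧸ N) w := QuotientGroup.commute_mk_iff.mpr h
  have key : Commute (((u ^ x)⁻¹ : G) : G ⧸ N) ((w ^ y)⁻¹ : G) := by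
    simpa only [QuotientGroup.mk_inv, QuotientGroup.mk_zpow] using (hc.zpow_zpow x y).inv_inv
  have hcomm : commElt (u ^ x) (w ^ y) = ⁅(u ^ x)⁻¹, (w ^ y)⁻¹⁆ := by
    simp only [commElt, commutatorElement_def, inv_inv]
  rw [hcomm]
  exact QuotientGroup.commute_mk_iff.mp key

end LowerCentralSeries

namespace BS

variable (m n : ℤ)

theorem t_inv_mul_a_zpow_mul_t : (t m n)⁻¹ * a m n ^ m * t m n = a m n ^ n := by
  have hrel : ((FreeGroup.of 0)⁻¹ * FreeGroup.of 1 ^ m * FreeGroup.of 0 *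
      (FreeGroup.of 1 ^ n)⁻¹ : FreeGroup (Fin 2)) ∈ Subgroup.normalClosure (BSRels m n) :=
    Subgroup.subset_normalClosure rfl
  have h := (QuotientGroup.eq_one_iff _).mpr hrel
  simp only [QuotientGroup.mk_mul, QuotientGroup.mk_inv, QuotientGroup.mk_zpow] at h
  exact mul_inv_eq_one.mp h

theorem commutatorElement_a_zpow_mul_t_inv (j : ℤ) :
    ⁅a m n ^ (m * j), (t m n)⁻¹⁆ = a m n ^ ((m - n) * j) := by
  have hconj : (t m n)⁻¹ * a m n ^ (m * -j) * t m n = a m n ^ (n * -j) := by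
    rw [zpow_mul, zpow_mul, ← conjZPow_one, ← conjZPow_zpow, conjZPow_one,
      t_inv_mul_a_zpow_mul_t]
  calc ⁅a m n ^ (m * j), (t m n)⁻¹⁆
        = a m n ^ (m * j) * ((t m n)⁻¹ * a m n ^ (m * -j) * t m n) := by
        rw [commutatorElement_def, mul_neg, zpow_neg]
        group
    _ = a m n ^ ((m - n) * j) := by
        rw [hconj, ← zpow_add]
        ring_nf

theorem a_zpow_mem_lowerCentralSeries {m' n' d : ℤ} (hm : m = m' * d) (hn : n = n' * d)
    (c : ℕ) :
    a m n ^ ((m' - n') ^ c * d) ∈ (⊤ : Subgroup (BS m n)).lowerCentralSeries c := by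
  induction c with
  | zero => exact Subgroup.mem_top _
  | succ c ih =>
    have hmem : a m n ^ (m * (m' - n') ^ c) ∈ (⊤ : Subgroup (BS m n)).lowerCentralSeries c := by
      rw [show m * (m' - n') ^ c = (m' - n') ^ c * d * m' by rw [hm]; ring, zpow_mul]
      exact Subgroup.zpow_mem _ ih _
    have h := commutatorElement_mem_lowerCentralSeries_succ hmem (t m n)⁻¹
    rwa [commutatorElement_a_zpow_mul_t_inv,
      show (m - n) * (m' - n') ^ c = (m' - n') ^ (c + 1) * d by rw [hm, hn]; ring] at h

theorem commutatorElement_conjZPow_mem_lowerCentralSeries {m' n' d : ℤ} (hm : m = m' * d)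
    (hn : n = n' * d) (hcop : IsCoprime m' n') (c : ℕ) (i j : ℤ) :
    ⁅conjZPow (t m n) (a m n) i ^ d, conjZPow (t m n) (a m n) j⁆ ∈
      (⊤ : Subgroup (BS m n)).lowerCentralSeries c := by
  induction c generalizing i j with
  | zero => exact Subgroup.mem_top _
  | succ c ih =>
    set φ := QuotientGroup.mk' ((⊤ : Subgroup (BS m n)).lowerCentralSeries (c + 1))
    have hφ (x : BS m n) :
        φ x = 1 ↔ x ∈ (⊤ : Subgroup (BS m n)).lowerCentralSeries (c + 1) :=
      QuotientGroup.eq_one_iff x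
    rw [← hφ, map_commutatorElement, map_zpow, map_conjZPow, map_conjZPow]
    have hm' : IsCoprime m' ((m' - n') ^ c) :=
      (mul_one m' ▸ IsCoprime.mul_sub_left_right_iff.mpr hcop).pow_right
    have hn' : IsCoprime n' ((m' - n') ^ c) :=
      (mul_one n' ▸ IsCoprime.sub_mul_left_right_iff.mpr hcop.symm).pow_right
    refine commutatorElement_conjZPow_eq_one ?_ (fun i j ↦ ?_) (fun k ↦ ?_) hm' hn' i j
    · rw [← hm, ← hn, ← map_inv, ← map_zpow, ← map_zpow, ← map_mul, ← map_mul,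
        t_inv_mul_a_zpow_mul_t]
    · rw [← map_conjZPow, ← map_conjZPow, ← map_zpow, ← map_commutatorElement]
      exact commute_mk_of_mem_lowerCentralSeries (ih i j)
    · rw [← map_conjZPow, ← map_zpow, ← map_commutatorElement, hφ, conjZPow_zpow]
      exact commutatorElement_mem_lowerCentralSeries_succ
        (conjZPow_mem (a_zpow_mem_lowerCentralSeries m n hm hn c) _ _) _

theorem commutatorElement_conjZPow_mem_lcsOmega (i j : ℤ) :
    ⁅conjZPow (t m n) (a m n) i ^ (Int.gcd m n : ℤ), conjZPow (t m n) (a m n) j⁆ ∈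
      lcsOmega (BS m n) := by
  rcases Nat.eq_zero_or_pos (Int.gcd m n) with h0 | hpos
  · simp [h0]
  obtain ⟨m', n', hcop, hm, hn⟩ := Int.exists_gcd_one hpos
  exact Subgroup.mem_iInf.mpr fun c ↦
    commutatorElement_conjZPow_mem_lowerCentralSeries m n hm hn
      (Int.isCoprime_iff_gcd_eq_one.mpr hcop) c i j

end BS

theorem stmt10_general (m n : ℤ) (d : ℕ) (hd : (d : ℤ) = Int.gcd m n)
    (k x y : ℤ) :
    commElt (((BS.t m n) ^ (-k) * (BS.a m n) ^ (d : ℤ) * (BS.t m n) ^ k) ^ x) ((BS.a m n) ^ y)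
        ∈ lcsOmega (BS m n) ∧
    commElt (((BS.t m n) ^ (-k) * BS.a m n * (BS.t m n) ^ k) ^ y) (((BS.a m n) ^ (d : ℤ)) ^ x)
        ∈ lcsOmega (BS m n) := by
  obtain rfl : d = Int.gcd m n := by exact_mod_cast hd
  have h₁ := BS.commutatorElement_conjZPow_mem_lcsOmega m n k 0
  have h₂ := BS.commutatorElement_conjZPow_mem_lcsOmega m n 0 k
  rw [conjZPow_zpow, conjZPow_zero] at h₁
  rw [conjZPow_zero, ← commutatorElement_inv, inv_mem_iff] at h₂
  exact ⟨commElt_zpow_zpow_mem h₁ x y, commElt_zpow_zpow_mem h₂ y x⟩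

theorem stmt10 (m n : ℤ) (hm : 0 < m) (hmn : m ≤ |n|) (d : ℕ) (hd : (d : ℤ) = Int.gcd m n)
    (k x y : ℤ) :
    commElt (((BS.t m n) ^ (-k) * (BS.a m n) ^ (d : ℤ) * (BS.t m n) ^ k) ^ x) ((BS.a m n) ^ y)
        ∈ lcsOmega (BS m n) ∧
    commElt (((BS.t m n) ^ (-k) * BS.a m n * (BS.t m n) ^ k) ^ y) (((BS.a m n) ^ (d : ℤ)) ^ x)
        ∈ lcsOmega (BS m n) :=
  stmt10_general m n d hd k x y
end

section
/- Let G = BS(m,n) be the Baumslag–Solitar group with 0 < m ≤ |n| and d = gcd(m,n). Then for all k ∈ ℤ: (1) [t^{-k} a^d t^k, a^d] ∈ [γ_ω(G), G]; (2) [t^{-k} a^d t^k, a]^d ∈ [γ_ω(G), G]; and (3) [t^{-k} a t^k, a^d]^d ∈ [γ_ω(G), G]. -/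
/-!
Write `b = a ^ d`, `m = d m'`, `n = d n'` with `m'`, `n'` coprime, so that `t⁻¹ b ^ m' t = b ^ n'`.
Modulo `γ_{c+1}` the element `b` has order dividing `(m' - n') ^ c`, since
`z ^ (m' - n') = ⁅z ^ m', t⁻¹⁆` for `z = b ^ ((m' - n') ^ (c - 1))`. As `m'` and `n'` are prime to
`m' - n'`, conjugation by `t` then permutes the powers of `b`, so every `t ^ (-j) b t ^ j` is a
power of `b` modulo every `γ_c`: its commutators with `b` and with `a` lie in `γ_ω`.

Modulo `[γ_ω, G]` the commutators `χ_j = [t ^ (-j) b t ^ j, b]` are therefore central, which gives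
`χ_{j+1} ^ m' = χ_j ^ n'` and `χ_{-j} = χ_j⁻¹`. Starting from `χ_0 = 1`, coprimality of `m'` and `n'`
forces `χ_j = 1` for all `j`. Centrality of `[t ^ (-k) b t ^ k, a]` turns its `d`-th power into
`[t ^ (-k) b t ^ k, b] = 1`, and the third element is a conjugate of the inverse of the second one
at `-k`.
-/

open scoped commutatorElement

open Subgroup

section Commutator

variable {G : Type*} [Group G]

theorem commElt_eq_one_iff {x y : G} : commElt x y = 1 ↔ Commute x y := by
  have h : commElt x y = (y * x)⁻¹ * (x * y) := by simp only [commElt]; group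
  rw [h, inv_mul_eq_one, commute_iff_eq, eq_comm]

theorem commElt_eq_commutatorElement (x y : G) : commElt x y = ⁅x⁻¹, y⁻¹⁆ := by
  simp only [commElt, commutatorElement_def, inv_inv]

theorem commElt_inv (x y : G) : (commElt x y)⁻¹ = commElt y x := by
  simp only [commElt]; group

theorem map_commElt {H F : Type*} [Group H] [FunLike F G H] [MonoidHomClass F G H] (f : F)
    (x y : G) :
    f (commElt x y) = commElt (f x) (f y) := by
  simp only [commElt, map_mul, map_inv]

theorem inv_mul_zpow_mul (g x : G) (p : ℤ) : g⁻¹ * x ^ p * g = (g⁻¹ * x * g) ^ p := by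
  simpa only [inv_inv] using (conj_zpow (a := g⁻¹) (b := x) (i := p)).symm

theorem commElt_zpow_left {x y : G} (h : Commute x (commElt x y)) (p : ℤ) :
    commElt (x ^ p) y = commElt x y ^ p := by
  have hconj : y⁻¹ * x * y = x * commElt x y := by simp only [commElt]; group
  calc commElt (x ^ p) y = (x ^ p)⁻¹ * (y⁻¹ * x ^ p * y) := by simp only [commElt, mul_assoc]
    _ = commElt x y ^ p := by
      rw [inv_mul_zpow_mul, hconj, h.mul_zpow, inv_mul_cancel_left]

theorem commElt_zpow_right {x y : G} (h : Commute y (commElt x y)) (p : ℤ) :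
    commElt x (y ^ p) = commElt x y ^ p := by
  have h' : Commute y (commElt y x) := by rw [← commElt_inv]; exact h.inv_right
  rw [← commElt_inv, commElt_zpow_left h', ← inv_zpow, commElt_inv]

theorem commElt_mem_iff_commute {K : Subgroup G} [K.Normal] {x y : G} :
    commElt x y ∈ K ↔ Commute (x : G ⧸ K) (y : G ⧸ K) := by
  rw [← QuotientGroup.eq_one_iff, ← QuotientGroup.coe_mk', map_commElt, commElt_eq_one_iff]

end Commutator

section LowerCentralSeries

variable {G : Type*} [Group G]

theorem mem_lcsOmega_iff {x : G} :
    x ∈ lcsOmega G ↔ ∀ c : ℕ, x ∈ (⊤ : Subgroup G).lowerCentralSeries c :=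
  mem_iInf

instance : (lcsOmega G).Normal := normal_iInf_normal fun _ ↦ inferInstance

theorem mk_mem_center_of_mem {H : Subgroup G} [H.Normal] {x : G} (hx : x ∈ H) :
    (x : G ⧸ ⁅H, (⊤ : Subgroup G)⁆) ∈ center (G ⧸ ⁅H, (⊤ : Subgroup G)⁆) := by
  refine mem_center_iff.2 fun q ↦ ?_
  obtain ⟨g, rfl⟩ := QuotientGroup.mk_surjective q
  refine (commElt_mem_iff_commute.1 ?_).symm.eq
  rw [commElt_eq_commutatorElement]
  exact commutator_mem_commutator (inv_mem hx) (mem_top _)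

end LowerCentralSeries

section ZPowers

variable {G : Type*} [Group G]

theorem mem_zpowers_zpow_of_isCoprime {x : G} {m D : ℤ} (hmD : IsCoprime m D) (hx : x ^ D = 1) :
    x ∈ zpowers (x ^ m) := by
  obtain ⟨u, v, huv⟩ := hmD
  refine ⟨u, ?_⟩
  calc (x ^ m) ^ u = (x ^ m) ^ u * (x ^ D) ^ v := by rw [hx, one_zpow, mul_one]
    _ = x := by rw [← zpow_mul, ← zpow_mul, ← zpow_add, mul_comm m, mul_comm D, huv, zpow_one]

theorem eq_one_of_zpow_eq_one_of_isCoprime_s14 {x : G} {m n : ℤ} (hmn : IsCoprime m n)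
    (hm : x ^ m = 1) (hn : x ^ n = 1) : x = 1 := by
  simpa [hm] using mem_zpowers_zpow_of_isCoprime hmn hn

theorem conj_mem_zpowers_of_isCoprime {g b : G} {m n D : ℤ} (hg : g * b ^ m * g⁻¹ = b ^ n)
    (hb : b ^ D = 1) (hmD : IsCoprime m D) : g * b * g⁻¹ ∈ zpowers b := by
  obtain ⟨u, hu⟩ := mem_zpowers_iff.1 (mem_zpowers_zpow_of_isCoprime hmD hb)
  refine mem_zpowers_iff.2 ⟨n * u, ?_⟩
  rw [zpow_mul, ← hg, conj_zpow, hu]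

theorem mem_normalizer_zpowers {g b : G} (h₁ : g * b * g⁻¹ ∈ zpowers b)
    (h₂ : g⁻¹ * b * g ∈ zpowers b) : g ∈ normalizer (zpowers b : Set G) := by
  have key : ∀ g : G, g * b * g⁻¹ ∈ zpowers b → ∀ h ∈ zpowers b, g * h * g⁻¹ ∈ zpowers b := by
    rintro g hg _ ⟨k, rfl⟩
    simpa only [← conj_zpow] using zpow_mem hg k
  refine mem_normalizer_iff.2 fun h ↦ ⟨key g h₁ h, fun hh ↦ ?_⟩
  simpa [mul_assoc] using key g⁻¹ (by rwa [inv_inv]) _ hh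

end ZPowers

section ConjugateRelation

variable {G : Type*} [Group G] {t b : G} {m n : ℤ}

theorem zpow_sub_pow_mem_lowerCentralSeries (hrel : t⁻¹ * b ^ m * t = b ^ n) (c : ℕ) :
    b ^ ((m - n) ^ c) ∈ (⊤ : Subgroup G).lowerCentralSeries c := by
  induction c with
  | zero => exact mem_top _
  | succ c ih =>
    set z := b ^ ((m - n) ^ c)
    have hz : t⁻¹ * z ^ m * t = z ^ n := by
      simp only [z, ← zpow_mul, mul_comm _ m, mul_comm _ n]
      rw [zpow_mul, inv_mul_zpow_mul, hrel, ← zpow_mul]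
    have hcomm : b ^ ((m - n) ^ (c + 1)) = ⁅z ^ m, t⁻¹⁆ :=
      calc b ^ ((m - n) ^ (c + 1)) = z ^ m * (z ^ n)⁻¹ := by
            rw [← zpow_sub, ← zpow_mul, pow_succ]
        _ = z ^ m * (t⁻¹ * z ^ m * t)⁻¹ := by rw [hz]
        _ = ⁅z ^ m, t⁻¹⁆ := by rw [commutatorElement_def]; group
    rw [hcomm]
    exact commutator_mem_commutator (zpow_mem ih m) (mem_top _)

theorem zpow_neg_mul_mul_zpow_mem_zpowers {D : ℤ} (hrel : t⁻¹ * b ^ m * t = b ^ n)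
    (hb : b ^ D = 1) (hmD : IsCoprime m D) (hnD : IsCoprime n D) (j : ℤ) :
    t ^ (-j) * b * t ^ j ∈ zpowers b := by
  have h₁ : t⁻¹ * b * t⁻¹⁻¹ ∈ zpowers b :=
    conj_mem_zpowers_of_isCoprime (by rwa [inv_inv]) hb hmD
  have hrel' : t * b ^ n * t⁻¹ = b ^ m := by rw [← hrel]; group
  have h₂ : t * b * t⁻¹ ∈ zpowers b := conj_mem_zpowers_of_isCoprime hrel' hb hnD
  have ht : t⁻¹ ^ j ∈ normalizer (zpowers b : Set G) :=
    zpow_mem (mem_normalizer_zpowers h₁ (by rwa [inv_inv])) j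
  simpa [zpow_neg] using (mem_normalizer_iff.1 ht b).1 (mem_zpowers b)

theorem commElt_conj_mem_lcsOmega (hmn : IsCoprime m n) (hrel : t⁻¹ * b ^ m * t = b ^ n)
    {x : G} (hx : Commute b x) (j : ℤ) : commElt (t ^ (-j) * b * t ^ j) x ∈ lcsOmega G := by
  refine mem_lcsOmega_iff.2 fun c ↦ commElt_mem_iff_commute.2 ?_
  set K := (⊤ : Subgroup G).lowerCentralSeries c
  have hrelK : (t : G ⧸ K)⁻¹ * (b : G ⧸ K) ^ m * t = (b : G ⧸ K) ^ n := by
    simpa using congrArg ((↑) : G → G ⧸ K) hrel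
  have hbK : (b : G ⧸ K) ^ ((m - n) ^ c) = 1 := by
    rw [← QuotientGroup.mk_zpow, QuotientGroup.eq_one_iff]
    exact zpow_sub_pow_mem_lowerCentralSeries hrel c
  have hmD : IsCoprime m ((m - n) ^ c) :=
    .pow_right (by simpa using (IsCoprime.mul_sub_left_right_iff (z := 1)).2 hmn)
  have hnD : IsCoprime n ((m - n) ^ c) :=
    .pow_right (by simpa using (IsCoprime.sub_mul_left_right_iff (z := 1)).2 hmn.symm)
  obtain ⟨k, hk⟩ := mem_zpowers_iff.1 (zpow_neg_mul_mul_zpow_mem_zpowers hrelK hbK hmD hnD j)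
  rw [QuotientGroup.mk_mul, QuotientGroup.mk_mul, QuotientGroup.mk_zpow, QuotientGroup.mk_zpow,
    ← hk]
  exact (hx.map (QuotientGroup.mk' K)).zpow_left k

end ConjugateRelation

theorem commute_conj_of_commElt_mem_center {G : Type*} [Group G] {t b : G} {m n : ℤ}
    (hmn : IsCoprime m n) (hrel : t⁻¹ * b ^ m * t = b ^ n)
    (hcent : ∀ j : ℤ, commElt (t ^ (-j) * b * t ^ j) b ∈ center G) (j : ℤ) :
    Commute (t ^ (-j) * b * t ^ j) b := by
  set y : ℤ → G := fun j ↦ t ^ (-j) * b * t ^ j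
  set χ : ℤ → G := fun j ↦ commElt (y j) b
  have hcomm (j : ℤ) (g : G) : Commute g (χ j) := mem_center_iff.1 (hcent j) g
  have hy (j : ℤ) : y (j + 1) ^ m = y j ^ n := by
    simp only [y, zpow_neg, ← inv_mul_zpow_mul, ← hrel, zpow_add_one]
    group
  have hstep (j : ℤ) : χ (j + 1) ^ m = χ j ^ n := by
    simp only [χ]
    rw [← commElt_zpow_left (hcomm _ _), hy, commElt_zpow_left (hcomm _ _)]
  have hneg (j : ℤ) : χ (-j) = (χ j)⁻¹ := by
    calc χ (-j) = MulAut.conj (t ^ (-j)) (χ (-j)) := by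
          rw [MulAut.conj_apply, (hcomm (-j) _).eq, mul_inv_cancel_right]
      _ = commElt b (y j) := by
          simp only [χ]
          rw [map_commElt]
          congr 1 <;> simp only [MulAut.conj_apply, y] <;> group
      _ = (χ j)⁻¹ := (commElt_inv _ _).symm
  have hnat (q : ℕ) : χ q = 1 := by
    induction q with
    | zero => simp [χ, y, commElt]
    | succ q ih =>
      refine eq_one_of_zpow_eq_one_of_isCoprime_s14 hmn ?_ ?_
      · rw [Nat.cast_succ, hstep, ih, one_zpow]
      · have h := hstep (-(q + 1 : ℤ))
        rw [show -((q : ℤ) + 1) + 1 = -q by ring, hneg, ih, inv_one, one_zpow, hneg, inv_zpow,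
          eq_comm, inv_eq_one] at h
        exact_mod_cast h
  rw [← commElt_eq_one_iff]
  obtain ⟨q, rfl | rfl⟩ := Int.eq_nat_or_neg j
  · exact hnat q
  · exact (hneg q).trans (by rw [hnat, inv_one])

section Quotient

variable {G : Type*} [Group G] {t a b : G} {δ m n : ℤ}

local notation "Q" => G ⧸ ⁅lcsOmega G, (⊤ : Subgroup G)⁆

theorem mk_commElt (K : Subgroup G) [K.Normal] (x y : G) :
    ((commElt x y : G) : G ⧸ K) = commElt (x : G ⧸ K) (y : G ⧸ K) :=
  map_commElt (QuotientGroup.mk' K) x y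

theorem commute_mk_conj (hmn : IsCoprime m n) (hrel : t⁻¹ * b ^ m * t = b ^ n) (j : ℤ) :
    Commute ((t ^ (-j) * b * t ^ j : G) : Q) (b : Q) := by
  have hrelQ : (t : Q)⁻¹ * (b : Q) ^ m * t = (b : Q) ^ n := by
    simpa using congrArg ((↑) : G → Q) hrel
  have hcent (j : ℤ) : commElt ((t : Q) ^ (-j) * b * t ^ j) b ∈ center Q := by
    simpa [mk_commElt] using
      mk_mem_center_of_mem (commElt_conj_mem_lcsOmega hmn hrel (Commute.refl b) j)
  simpa using commute_conj_of_commElt_mem_center hmn hrelQ hcent j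

theorem commElt_conj_self_mem_commutator_lcsOmega (hmn : IsCoprime m n)
    (hrel : t⁻¹ * b ^ m * t = b ^ n) (k : ℤ) :
    commElt (t ^ (-k) * b * t ^ k) b ∈ ⁅lcsOmega G, (⊤ : Subgroup G)⁆ :=
  commElt_mem_iff_commute.2 (commute_mk_conj hmn hrel k)

theorem commElt_conj_zpow_base_zpow_mem_commutator_lcsOmega (hmn : IsCoprime m n)
    (hrel : t⁻¹ * (a ^ δ) ^ m * t = (a ^ δ) ^ n) (k : ℤ) :
    commElt (t ^ (-k) * a ^ δ * t ^ k) a ^ δ ∈ ⁅lcsOmega G, (⊤ : Subgroup G)⁆ := by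
  have hcomm : Commute (a : Q) (commElt ((t ^ (-k) * a ^ δ * t ^ k : G) : Q) a) := by
    have := mk_mem_center_of_mem
      (commElt_conj_mem_lcsOmega hmn hrel ((Commute.refl a).zpow_left δ) k)
    rw [mk_commElt] at this
    exact mem_center_iff.1 this a
  rw [← QuotientGroup.eq_one_iff, QuotientGroup.mk_zpow, mk_commElt, ← commElt_zpow_right hcomm,
    commElt_eq_one_iff, ← QuotientGroup.mk_zpow]
  exact commute_mk_conj hmn hrel k

theorem commElt_conj_zpow_eq_conj_inv (k : ℤ) :
    commElt (t ^ (-k) * a * t ^ k) b ^ δ =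
      t ^ (-k) * (commElt (t ^ k * b * t ^ (-k)) a ^ δ)⁻¹ * (t ^ (-k))⁻¹ := by
  have h : commElt (t ^ (-k) * a * t ^ k) b =
      t ^ (-k) * (commElt (t ^ k * b * t ^ (-k)) a)⁻¹ * (t ^ (-k))⁻¹ := by
    simp only [commElt]; group
  rw [h, conj_zpow, inv_zpow]

theorem commElt_conj_base_zpow_zpow_mem_commutator_lcsOmega (hmn : IsCoprime m n)
    (hrel : t⁻¹ * (a ^ δ) ^ m * t = (a ^ δ) ^ n) (k : ℤ) :
    commElt (t ^ (-k) * a * t ^ k) (a ^ δ) ^ δ ∈ ⁅lcsOmega G, (⊤ : Subgroup G)⁆ := by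
  have h := commElt_conj_zpow_base_zpow_mem_commutator_lcsOmega hmn hrel (-k)
  rw [neg_neg] at h
  rw [commElt_conj_zpow_eq_conj_inv]
  exact Normal.conj_mem inferInstance _ (inv_mem h) _

end Quotient

theorem BS.relation (m n : ℤ) : (BS.t m n)⁻¹ * BS.a m n ^ m * BS.t m n = BS.a m n ^ n :=
  mul_inv_eq_one.1 (PresentedGroup.one_of_mem (Set.mem_singleton _))

theorem stmt14_general (m n : ℤ) (hm : 0 < m) (d : ℕ) (hd : (d : ℤ) = Int.gcd m n)
    (k : ℤ) :
    commElt ((BS.t m n) ^ (-k) * (BS.a m n) ^ (d : ℤ) * (BS.t m n) ^ k) ((BS.a m n) ^ (d : ℤ))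
        ∈ ⁅lcsOmega (BS m n), (⊤ : Subgroup (BS m n))⁆ ∧
    (commElt ((BS.t m n) ^ (-k) * (BS.a m n) ^ (d : ℤ) * (BS.t m n) ^ k) (BS.a m n)) ^ (d : ℤ)
        ∈ ⁅lcsOmega (BS m n), (⊤ : Subgroup (BS m n))⁆ ∧
    (commElt ((BS.t m n) ^ (-k) * BS.a m n * (BS.t m n) ^ k) ((BS.a m n) ^ (d : ℤ))) ^ (d : ℤ)
        ∈ ⁅lcsOmega (BS m n), (⊤ : Subgroup (BS m n))⁆ := by
  obtain ⟨m', n', hgcd, hm', hn'⟩ := Int.exists_gcd_one (Int.gcd_pos_of_ne_zero_left n hm.ne')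
  have hmn : IsCoprime m' n' := Int.isCoprime_iff_gcd_eq_one.2 hgcd
  have hrel : (BS.t m n)⁻¹ * (BS.a m n ^ (d : ℤ)) ^ m' * BS.t m n =
      (BS.a m n ^ (d : ℤ)) ^ n' := by
    rw [← zpow_mul, ← zpow_mul, mul_comm, hd, ← hm', mul_comm, ← hn']
    exact BS.relation m n
  exact ⟨commElt_conj_self_mem_commutator_lcsOmega hmn hrel k,
    commElt_conj_zpow_base_zpow_mem_commutator_lcsOmega hmn hrel k,
    commElt_conj_base_zpow_zpow_mem_commutator_lcsOmega hmn hrel k⟩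

theorem stmt14 (m n : ℤ) (hm : 0 < m) (hmn : m ≤ |n|) (d : ℕ) (hd : (d : ℤ) = Int.gcd m n)
    (k : ℤ) :
    commElt ((BS.t m n) ^ (-k) * (BS.a m n) ^ (d : ℤ) * (BS.t m n) ^ k) ((BS.a m n) ^ (d : ℤ))
        ∈ ⁅lcsOmega (BS m n), (⊤ : Subgroup (BS m n))⁆ ∧
    (commElt ((BS.t m n) ^ (-k) * (BS.a m n) ^ (d : ℤ) * (BS.t m n) ^ k) (BS.a m n)) ^ (d : ℤ)
        ∈ ⁅lcsOmega (BS m n), (⊤ : Subgroup (BS m n))⁆ ∧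
    (commElt ((BS.t m n) ^ (-k) * BS.a m n * (BS.t m n) ^ k) ((BS.a m n) ^ (d : ℤ))) ^ (d : ℤ)
        ∈ ⁅lcsOmega (BS m n), (⊤ : Subgroup (BS m n))⁆ :=
  stmt14_general m n hm d hd k
end
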